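/- arXiv:1701.05319 — 2 statements merged into one kernel-verified Lean document; each statement's English description precedes it below -/
import Mathlib

section
/- Fix k and let N_k = {t_1 < ... < t_k} be the first k elements of ≺ arranged in natural order, with s_k = t_j the ≺-maximal element of N_k. Then the system of inequalities (3)_k: c'_{t_{i+1}} - c'_{t_i} ≥ min(0, c_{t_{i+1}} - c_{t_i}) for all i = 1,...,k-1 (taken for all k ∈ N) is equivalent to the weaker-looking system (3)'_k: c'_{t_{j+1}} - c'_{t_j} ≥ -(c_{t_j} - c_{t_{j+1}}) and c'_{t_j} - c'_{t_{j-1}} ≥ 0 (taken for all k ∈ N), for nonnegative rationals c'_1,...,c'_n satisfying 0 ≤ c'_i ≤ c_i. -/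
def firstK {n : ℕ} (σ : Equiv.Perm (Fin n)) (k : ℕ) (i : Fin n) : Prop :=
  ∃ m : Fin n, (m : ℕ) < k ∧ σ m = i

def adjIn {n : ℕ} (P : Fin n → Prop) (a b : Fin n) : Prop :=
  P a ∧ P b ∧ a < b ∧ ∀ x, P x → ¬(a < x ∧ x < b)

/-- The system (3) (all relations (3)_k) is equivalent to the system (3)'
(for each k, only the relations involving the `≺`-maximal element `s_k = σ k` of `N_k`). -/
theorem stmt1 (n : ℕ) (hn : 0 < n) (c : Fin n → ℚ) (hc : ∀ k, 0 ≤ c k)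
    (σ : Equiv.Perm (Fin n)) (hσ : ∀ i j : Fin n, i < j → c (σ i) ≤ c (σ j))
    (c' : Fin n → ℚ) (hc' : ∀ k, 0 ≤ c' k ∧ c' k ≤ c k) :
    (∀ k : ℕ, ∀ a b : Fin n, adjIn (firstK σ k) a b →
        c' b - c' a ≥ min 0 (c b - c a))
    ↔ (∀ k : Fin n, ∀ a b : Fin n, adjIn (firstK σ ((k : ℕ) + 1)) a b →
        (a = σ k → c' b - c' a ≥ -(c a - c b)) ∧ (b = σ k → c' b - c' a ≥ 0)) := by
  constructor
  · intro h k a b hab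
    obtain ⟨ha, hb, hlt, hadj⟩ := hab
    have h3 := h ((k : ℕ) + 1) a b ⟨ha, hb, hlt, hadj⟩
    constructor
    · intro hak
      obtain ⟨m, hm, hmb⟩ := hb
      have hne : m ≠ k := by
        rintro rfl
        rw [hak, hmb] at hlt
        exact lt_irrefl _ hlt
      have hmk : m < k := by
        rw [Fin.lt_def]
        have := Fin.val_ne_of_ne hne
        omega
      have hcba : c b ≤ c a := by rw [← hmb, hak]; exact hσ m k hmk
      have hmin : min 0 (c b - c a) = c b - c a := min_eq_right (by linarith)
      rw [hmin] at h3
      linarith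
    · intro hbk
      obtain ⟨m, hm, hma⟩ := ha
      have hne : m ≠ k := by
        rintro rfl
        rw [← hma, ← hbk] at hlt
        exact absurd hlt (lt_irrefl _)
      have hmk : m < k := by
        rw [Fin.lt_def]
        have := Fin.val_ne_of_ne hne
        omega
      have hcab : c a ≤ c b := by rw [← hma, hbk]; exact hσ m k hmk
      have hmin : min 0 (c b - c a) = 0 := min_eq_left (by linarith)
      rw [hmin] at h3
      linarith
  · intro h k
    induction k with
    | zero =>
      rintro a b ⟨⟨m, hm, _⟩, _⟩
      omega
    | succ k ih =>
      rintro a b ⟨ha, hb, hlt, hadj⟩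
      by_cases hkn : k < n
      · set kk : Fin n := ⟨k, hkn⟩ with hkk
        by_cases hak : a = σ kk
        · have h3 := (h kk a b ⟨ha, hb, hlt, hadj⟩).1 hak
          have : min 0 (c b - c a) ≤ c b - c a := min_le_right _ _
          linarith
        · by_cases hbk : b = σ kk
          · have h3 := (h kk a b ⟨ha, hb, hlt, hadj⟩).2 hbk
            have : min 0 (c b - c a) ≤ 0 := min_le_left _ _
            linarith
          · apply ih a b
            refine ⟨?_, ?_, hlt, ?_⟩
            · obtain ⟨m, hm, hma⟩ := ha
              refine ⟨m, ?_, hma⟩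
              have hne : m ≠ kk := by rintro rfl; exact hak hma.symm
              have := Fin.val_ne_of_ne hne
              simp only [hkk] at this
              omega
            · obtain ⟨m, hm, hmb⟩ := hb
              refine ⟨m, ?_, hmb⟩
              have hne : m ≠ kk := by rintro rfl; exact hbk hmb.symm
              have := Fin.val_ne_of_ne hne
              simp only [hkk] at this
              omega
            · rintro x ⟨m, hm, hmx⟩ hx
              exact hadj x ⟨m, by omega, hmx⟩ hx
      · apply ih a b
        have hfull : ∀ i : Fin n, firstK σ k i := fun i =>
          ⟨σ.symm i, by have := (σ.symm i).isLt; omega, by simp⟩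
        refine ⟨hfull a, hfull b, hlt, ?_⟩
        rintro x ⟨m, hm, hmx⟩ hx
        exact hadj x ⟨m, by omega, hmx⟩ hx
end

section
/- Let K(c) be the set of (c'_1,...,c'_n) ∈ ℚ^n satisfying 0 ≤ c'_k ≤ c_k for all k together with the conditions (3)_k for all k ∈ N (with respect to the order ≺). Fix s ∈ N with c_s maximal (the ≺-maximal element of N). If (c'_1,...,c'_{s-1}, c'_{s+1},...,c'_n) satisfies the conditions of K(c^-) where c^- omits c_s (with indices relabelled by closing the gap), and c'_s is any rational with c'_{s-1} ≤ c'_s ≤ c'_{s+1} + (c_s - c_{s+1}) (where c'_0 := 0, c'_{n+1} := 0, c_{n+1} := 0), then (c'_1,...,c'_n) ∈ K(c). -/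
/-- Binary fusion step: if the coefficients away from the `≺`-maximal index `s`
satisfy the defining conditions of `K(c⁻)` and
`c'_{s-1} ≤ c'_s ≤ c'_{s+1} + (c_s - c_{s+1})` (with the conventions
`c'_0 = 0`, `c'_{n+1} = 0`, `c_{n+1} = 0`), then `(c'_1, …, c'_n) ∈ K(c)`. -/
theorem stmt9 (n : ℕ) (hn : 0 < n) (c : Fin n → ℚ) (hc : ∀ k, 0 ≤ c k)
    (σ : Equiv.Perm (Fin n)) (hσ : ∀ i j : Fin n, i < j → c (σ i) ≤ c (σ j))
    (s : Fin n) (hs : s = σ ⟨n - 1, by omega⟩)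
    (c' : Fin n → ℚ)
    (hbd : ∀ i : Fin n, i ≠ s → 0 ≤ c' i ∧ c' i ≤ c i)
    (hminus : ∀ k : ℕ, k < n → ∀ a b : Fin n, adjIn (firstK σ k) a b →
      c' b - c' a ≥ min 0 (c b - c a))
    (hlow : (if _ : 0 < (s : ℕ) then
        c' ⟨(s : ℕ) - 1, lt_of_le_of_lt (Nat.sub_le _ _) s.isLt⟩ else 0) ≤ c' s)
    (hhigh : c' s ≤ (if h : (s : ℕ) + 1 < n then
        c' ⟨(s : ℕ) + 1, h⟩ + (c s - c ⟨(s : ℕ) + 1, h⟩) else c s)) :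
    (∀ i, 0 ≤ c' i ∧ c' i ≤ c i) ∧
    (∀ k : ℕ, ∀ a b : Fin n, adjIn (firstK σ k) a b →
      c' b - c' a ≥ min 0 (c b - c a)) := by
  have hmax : ∀ k : Fin n, c k ≤ c s := by
    intro k
    have h1 : σ (σ.symm k) = k := σ.apply_symm_apply k
    have h2 : (σ.symm k : ℕ) < n := (σ.symm k).isLt
    rcases Nat.lt_or_ge (σ.symm k : ℕ) (n - 1) with h | h
    · have := hσ (σ.symm k) ⟨n - 1, by omega⟩ (by simpa [Fin.lt_def] using h)
      rw [h1, ← hs] at this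
      exact this
    · have heq : σ.symm k = ⟨n - 1, by omega⟩ := Fin.ext (by simp only [Fin.val_mk]; omega)
      rw [hs, ← heq, h1]
  have hs0 : 0 ≤ c' s := by
    rcases Nat.eq_zero_or_pos (s : ℕ) with h | h
    · rw [dif_neg (by omega)] at hlow; exact hlow
    · rw [dif_pos h] at hlow
      have hne : (⟨(s : ℕ) - 1, lt_of_le_of_lt (Nat.sub_le _ _) s.isLt⟩ : Fin n) ≠ s := by
        intro he
        have := congrArg Fin.val he
        simp at this
        omega
      linarith [(hbd _ hne).1]
  have hs1 : c' s ≤ c s := by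
    by_cases h : (s : ℕ) + 1 < n
    · rw [dif_pos h] at hhigh
      have hne : (⟨(s : ℕ) + 1, h⟩ : Fin n) ≠ s := by
        intro he
        have := congrArg Fin.val he
        simp at this
      linarith [(hbd _ hne).2]
    · rw [dif_neg h] at hhigh; exact hhigh
  refine ⟨?_, ?_⟩
  · intro i
    by_cases hi : i = s
    · subst hi; exact ⟨hs0, hs1⟩
    · exact hbd i hi
  · intro k a b hab
    by_cases hk : k < n
    · exact hminus k hk a b hab
    · push_neg at hk
      obtain ⟨hPa, hPb, hlt, hbet⟩ := hab
      have hltv : (a : ℕ) < (b : ℕ) := hlt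
      have hsucc : (b : ℕ) = (a : ℕ) + 1 := by
        by_contra hne
        have hx : (a : ℕ) + 1 < n := by omega
        exact hbet ⟨(a : ℕ) + 1, hx⟩
          ⟨σ.symm ⟨(a : ℕ) + 1, hx⟩, by omega, σ.apply_symm_apply _⟩
          ⟨by simp [Fin.lt_def], by simp [Fin.lt_def]; omega⟩
      by_cases hbs : b = s
      · -- pair (s-1, s)
        have hspos : 0 < (s : ℕ) := by
          have := congrArg Fin.val hbs; omega
        rw [dif_pos hspos] at hlow
        have haeq : (⟨(s : ℕ) - 1, lt_of_le_of_lt (Nat.sub_le _ _) s.isLt⟩ : Fin n) = a := by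
          apply Fin.ext
          have := congrArg Fin.val hbs
          simp
          omega
        rw [haeq] at hlow
        have hmin : min 0 (c b - c a) = 0 := min_eq_left (by linarith [hmax a, hbs ▸ hmax a])
        rw [hbs] at hmin ⊢
        rw [hmin]
        linarith
      · by_cases has : a = s
        · -- pair (s, s+1)
          have hsn : (s : ℕ) + 1 < n := by
            have := congrArg Fin.val has
            have := b.isLt
            omega
          rw [dif_pos hsn] at hhigh
          have hbeq : (⟨(s : ℕ) + 1, hsn⟩ : Fin n) = b := by
            apply Fin.ext
            have := congrArg Fin.val has
            simp
            omega
          rw [hbeq] at hhigh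
          refine le_trans (min_le_right _ _) ?_
          rw [has]
          linarith
        · -- pair not involving s : use k = n - 1
          have hmem : ∀ i : Fin n, i ≠ s → firstK σ (n - 1) i := by
            intro i hi
            refine ⟨σ.symm i, ?_, σ.apply_symm_apply i⟩
            have h2 : (σ.symm i : ℕ) < n := (σ.symm i).isLt
            rcases Nat.lt_or_ge (σ.symm i : ℕ) (n - 1) with h | h
            · exact h
            · exfalso
              apply hi
              have heq : σ.symm i = ⟨n - 1, by omega⟩ := Fin.ext (by simp only [Fin.val_mk]; omega)
              rw [hs, ← heq, σ.apply_symm_apply]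
          exact hminus (n - 1) (by omega) a b
            ⟨hmem a has, hmem b hbs, hlt,
              fun x _ hx => by
                have h1 : (a : ℕ) < (x : ℕ) := hx.1
                have h2 : (x : ℕ) < (b : ℕ) := hx.2
                omega⟩
end
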